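/- Let Σ = (ρ; M_1,…,M_n) be a test on a finite-dimensional complex Hilbert space H, let E_1,…,E_n be events with E_i defined by M_i for each i, let K be a subsequence of (n] with K < i ≤ n, and let j be an element of K, with all conditional probabilities involved well-defined (nonzero conditioning probabilities). If Ind_Σ(E_i | E_j; 𝔼_{K∖j}) holds, then Ind_Σ(E_i | Ē_j; 𝔼_{K∖j}) holds, i.e. Pr_Σ[E_i | 𝔼_K^{(j→Ē_j)}] = Pr_Σ[E_i | 𝔼_{K∖j}], where 𝔼_K^{(j→Ē_j)} denotes 𝔼_K with E_j replaced by its complement Ē_j. -/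

import Mathlib

/-!
The events `E_j` and `Ē_j` split the complete event `I_{M_j}`, and every superoperator is
additive, so replacing `E_j` by `I_{M_j}` (i.e. dropping `j` from `K`) adds the probabilities:
`Pr_Σ[𝔼_K] + Pr_Σ[𝔼_K^{(j→Ē_j)}] = Pr_Σ[𝔼_{K∖j}]`, and the same with `i` adjoined to `K`.
Independence is the cross-multiplied identity `Pr_Σ[𝔼_K, E_i] Pr_Σ[𝔼_{K∖j}] =
Pr_Σ[𝔼_{K∖j}, E_i] Pr_Σ[𝔼_K]`; subtracting it from the two additivity identities gives the
corresponding identity for `Ē_j`.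
-/

open Matrix Finset
open scoped ComplexOrder

/-- A quantum measurement on `ℂ^d`: a finite family of operators indexed by the
outcomes in `spec`, satisfying the completeness condition `∑ Mₘ† Mₘ = I`. -/
structure Measurement (d : ℕ) where
  spec : Finset ℕ
  op : ℕ → Matrix (Fin d) (Fin d) ℂ
  complete : ∑ m ∈ spec, (op m)ᴴ * op m = 1

/-- An event `{M ∈ A}`: a measurement together with a subset of its spectrum. -/
structure QEvent (d : ℕ) where
  meas : Measurement d
  A : Finset ℕ
  sub : A ⊆ meas.spec

/-- The super-operator defined by an event: `ρ ↦ ∑_{m ∈ A} Mₘ ρ Mₘ†`. -/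
noncomputable def QEvent.superop {d : ℕ} (E : QEvent d) (ρ : Matrix (Fin d) (Fin d) ℂ) :
    Matrix (Fin d) (Fin d) ℂ :=
  ∑ m ∈ E.A, E.meas.op m * ρ * (E.meas.op m)ᴴ

/-- The probability of a sequence of events in state `ρ`:
`Pr_ρ[E₁,…,E_k] = tr(𝓔_k(⋯𝓔₁(ρ)⋯))`. -/
noncomputable def PrSeq {d : ℕ} (ρ : Matrix (Fin d) (Fin d) ℂ) (Es : List (QEvent d)) : ℝ :=
  (Matrix.trace (Es.foldl (fun σ E => E.superop σ) ρ)).re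

/-- A density operator: positive semidefinite with trace one. -/
def IsDensityOp {d : ℕ} (ρ : Matrix (Fin d) (Fin d) ℂ) : Prop :=
  ρ.PosSemidef ∧ ρ.trace = 1

/-- A projective measurement: every operator is an orthogonal projection and
distinct operators are orthogonal. -/
def Measurement.IsProjective {d : ℕ} (M : Measurement d) : Prop :=
  (∀ m ∈ M.spec, (M.op m)ᴴ = M.op m ∧ M.op m * M.op m = M.op m) ∧
  ∀ m ∈ M.spec, ∀ m' ∈ M.spec, m ≠ m' → M.op m * M.op m' = 0

/-- The complete event `I_M = {M ∈ spec(M)}`. -/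
def completeEvent {d : ℕ} (M : Measurement d) : QEvent d :=
  ⟨M, M.spec, subset_rfl⟩

/-- The complement `Ē = {M ∈ spec(M) \ A}` of the event `E = {M ∈ A}`. -/
def QEvent.compl {d : ℕ} (E : QEvent d) : QEvent d :=
  ⟨E.meas, E.meas.spec \ E.A, Finset.sdiff_subset⟩

/-- Conditional probability `Pr_ρ[𝔽|𝔼] = Pr_ρ[𝔼,𝔽] / Pr_ρ[𝔼]`. -/
noncomputable def condPrSeq {d : ℕ} (ρ : Matrix (Fin d) (Fin d) ℂ) (Fs Es : List (QEvent d)) : ℝ :=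
  PrSeq ρ (Es ++ Fs) / PrSeq ρ Es

/-- The list of events realizing `Pr_Σ[𝔼_K]` in the test `Σ = (ρ; M₁,…,M_n)`:
all measurements `M₁,…,M_{max K}` are performed; at the indices `i ∈ K` the event
`E i` is used, while at the remaining indices the complete event `I_{M_i}` is used. -/
noncomputable def testList {d : ℕ} (n : ℕ) (Ms : ℕ → Measurement d) (E : ℕ → QEvent d)
    (K : Finset ℕ) : List (QEvent d) :=
  ((List.range' 1 n).filter (fun i => decide (∃ k ∈ K, i ≤ k))).map
    (fun i => if i ∈ K then E i else completeEvent (Ms i))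

/-- The probability `Pr_Σ[𝔼_K]` of the subsequence of events indexed by `K` in the
test `Σ = (ρ; M₁,…,M_n)`. -/
noncomputable def PrTest {d : ℕ} (ρ : Matrix (Fin d) (Fin d) ℂ) (n : ℕ)
    (Ms : ℕ → Measurement d) (E : ℕ → QEvent d) (K : Finset ℕ) : ℝ :=
  PrSeq ρ (testList n Ms E K)

/-- The conditional probability `Pr_Σ[𝔼_L | 𝔼_K]` in a test (for `K < L`, the
concatenation `𝔼_K,𝔼_L` is the subsequence indexed by `K ∪ L`). -/
noncomputable def condPrTest {d : ℕ} (ρ : Matrix (Fin d) (Fin d) ℂ) (n : ℕ)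
    (Ms : ℕ → Measurement d) (E : ℕ → QEvent d) (L K : Finset ℕ) : ℝ :=
  PrTest ρ n Ms E (K ∪ L) / PrTest ρ n Ms E K

/-- Independence `Ind_Σ(E_i | 𝔼_J; 𝔼_{K∖J})`: `Pr_Σ[E_i|𝔼_K] = Pr_Σ[E_i|𝔼_{K∖J}]`. -/
def IndTest {d : ℕ} (ρ : Matrix (Fin d) (Fin d) ℂ) (n : ℕ)
    (Ms : ℕ → Measurement d) (E : ℕ → QEvent d) (i : ℕ) (J K : Finset ℕ) : Prop :=
  condPrTest ρ n Ms E {i} K = condPrTest ρ n Ms E {i} (K \ J)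

/-- Negative independence `NInd_Σ(E_i | 𝔼_K)`: `Pr_Σ[E_i | Ē_K] = Pr_Σ[E_i]`,
where in the conditioning sequence every event of `𝔼_K` is replaced by its complement. -/
def NIndTest {d : ℕ} (ρ : Matrix (Fin d) (Fin d) ℂ) (n : ℕ)
    (Ms : ℕ → Measurement d) (E : ℕ → QEvent d) (i : ℕ) (K : Finset ℕ) : Prop :=
  condPrTest ρ n Ms (Function.update (fun k => (E k).compl) i (E i)) {i} K
    = PrTest ρ n Ms E {i}

/-- `NInd_{Σ,𝔼}(k|l)`: `NInd_Σ(E_k | E₁,…,E_j)` for all `1 ≤ j ≤ l`. -/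
def NIndSeq {d : ℕ} (ρ : Matrix (Fin d) (Fin d) ℂ) (n : ℕ)
    (Ms : ℕ → Measurement d) (E : ℕ → QEvent d) (k l : ℕ) : Prop :=
  ∀ j, 1 ≤ j → j ≤ l → NIndTest ρ n Ms E k (Finset.Icc 1 j)

variable {d : ℕ}

namespace QEvent

theorem superop_add (E : QEvent d) (σ τ : Matrix (Fin d) (Fin d) ℂ) :
    E.superop (σ + τ) = E.superop σ + E.superop τ := by
  simp only [superop, Matrix.mul_add, Matrix.add_mul, Finset.sum_add_distrib]

theorem superop_add_superop_compl (E : QEvent d) (σ : Matrix (Fin d) (Fin d) ℂ) :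
    E.superop σ + E.compl.superop σ = (completeEvent E.meas).superop σ := by
  simp only [superop, compl, completeEvent]
  rw [add_comm]
  exact Finset.sum_sdiff E.sub

end QEvent

theorem trace_superop_completeEvent (M : Measurement d) (σ : Matrix (Fin d) (Fin d) ℂ) :
    ((completeEvent M).superop σ).trace = σ.trace := by
  simp only [completeEvent, QEvent.superop, Matrix.trace_sum]
  calc ∑ m ∈ M.spec, (M.op m * σ * (M.op m)ᴴ).trace
      = ∑ m ∈ M.spec, ((M.op m)ᴴ * M.op m * σ).trace := by
        refine Finset.sum_congr rfl fun m _ => ?_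
        rw [Matrix.trace_mul_comm, Matrix.mul_assoc]
    _ = σ.trace := by rw [← Matrix.trace_sum, ← Finset.sum_mul, M.complete, one_mul]

theorem foldl_superop_add (l : List (QEvent d)) (σ τ : Matrix (Fin d) (Fin d) ℂ) :
    l.foldl (fun σ E => E.superop σ) (σ + τ)
      = l.foldl (fun σ E => E.superop σ) σ + l.foldl (fun σ E => E.superop σ) τ := by
  induction l generalizing σ τ with
  | nil => rfl
  | cons E l ih => simp only [List.foldl_cons, QEvent.superop_add, ih]

theorem PrSeq_append_completeEvent (ρ : Matrix (Fin d) (Fin d) ℂ) (l : List (QEvent d))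
    (M : Measurement d) : PrSeq ρ (l ++ [completeEvent M]) = PrSeq ρ l := by
  simp only [PrSeq, List.foldl_append, List.foldl_cons, List.foldl_nil,
    trace_superop_completeEvent]

theorem PrSeq_add_of_superop_add (ρ : Matrix (Fin d) (Fin d) ℂ) (s t : List (QEvent d))
    {X Y Z : QEvent d} (h : ∀ σ, X.superop σ + Y.superop σ = Z.superop σ) :
    PrSeq ρ (s ++ X :: t) + PrSeq ρ (s ++ Y :: t) = PrSeq ρ (s ++ Z :: t) := by
  simp only [PrSeq, List.foldl_append, List.foldl_cons]
  rw [← Complex.add_re, ← Matrix.trace_add, ← foldl_superop_add, h]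

theorem PrSeq_map_update_add {ι : Type*} [DecidableEq ι] (ρ : Matrix (Fin d) (Fin d) ℂ)
    {l : List ι} (hl : l.Nodup) {j : ι} (hj : j ∈ l) (f : ι → QEvent d)
    {X Y Z : QEvent d} (h : ∀ σ, X.superop σ + Y.superop σ = Z.superop σ) :
    PrSeq ρ (l.map (Function.update f j X)) + PrSeq ρ (l.map (Function.update f j Y))
      = PrSeq ρ (l.map (Function.update f j Z)) := by
  obtain ⟨s, t, rfl⟩ := List.append_of_mem hj
  obtain ⟨-, hjt, hst⟩ := List.nodup_append.mp hl
  have hjs : j ∉ s := fun hjs => hst j hjs j List.mem_cons_self rfl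
  replace hjt : j ∉ t := (List.nodup_cons.mp hjt).1
  have hmap : ∀ {u : List ι}, j ∉ u → ∀ W, u.map (Function.update f j W) = u.map f :=
    fun hju W => List.map_congr_left fun a ha =>
      Function.update_of_ne (ne_of_mem_of_not_mem ha hju) W f
  simp only [List.map_append, List.map_cons, Function.update_self, hmap hjs, hmap hjt]
  exact PrSeq_add_of_superop_add ρ _ _ h

noncomputable def testEvent (Ms : ℕ → Measurement d) (E : ℕ → QEvent d) (K : Finset ℕ)
    (i : ℕ) : QEvent d :=
  if i ∈ K then E i else completeEvent (Ms i)

/-- Complete events preserve the trace, so performing also the measurements after `max K`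
does not change the probability. -/
theorem PrTest_eq_PrSeq_testEvent (ρ : Matrix (Fin d) (Fin d) ℂ) (n : ℕ)
    (Ms : ℕ → Measurement d) (E : ℕ → QEvent d) (K : Finset ℕ) :
    PrTest ρ n Ms E K = PrSeq ρ ((List.range' 1 n).map (testEvent Ms E K)) := by
  induction n with
  | zero => rfl
  | succ n ih =>
    rw [PrTest, testList] at ih ⊢
    simp only [List.range'_concat, List.filter_append, List.map_append, List.filter_cons,
      List.filter_nil, decide_eq_true_eq]
    by_cases hlast : ∃ k ∈ K, 1 + 1 * n ≤ k
    · have hall : (List.range' 1 n).filter (fun i => decide (∃ k ∈ K, i ≤ k))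
          = List.range' 1 n := by
        obtain ⟨k, hk, hnk⟩ := hlast
        refine List.filter_eq_self.mpr fun a ha => decide_eq_true ⟨k, hk, ?_⟩
        have := (List.mem_range'_1.mp ha).2
        omega
      rw [if_pos hlast, hall]
      rfl
    · have hnK : 1 + 1 * n ∉ K := fun h => hlast ⟨_, h, le_rfl⟩
      rw [if_neg hlast, List.map_nil, List.append_nil, ih, List.map_singleton, testEvent,
        if_neg hnK, PrSeq_append_completeEvent]

theorem testEvent_update_eq_update_sdiff (Ms : ℕ → Measurement d) (E : ℕ → QEvent d)
    {K : Finset ℕ} {j : ℕ} (hj : j ∈ K) (X : QEvent d) :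
    testEvent Ms (Function.update E j X) K
      = Function.update (testEvent Ms E (K \ {j})) j X := by
  funext a
  by_cases haj : a = j
  · subst haj
    simp [testEvent, hj]
  · simp [testEvent, haj]

theorem update_testEvent_sdiff_singleton (Ms : ℕ → Measurement d) (E : ℕ → QEvent d)
    (K : Finset ℕ) (j : ℕ) :
    Function.update (testEvent Ms E (K \ {j})) j (completeEvent (Ms j))
      = testEvent Ms E (K \ {j}) :=
  Function.update_eq_self_iff.mpr (by simp [testEvent])

theorem PrTest_add_PrTest_update_compl (ρ : Matrix (Fin d) (Fin d) ℂ) (n : ℕ)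
    (Ms : ℕ → Measurement d) (E : ℕ → QEvent d) {K : Finset ℕ} {j : ℕ} (hj : j ∈ K)
    (hjn : j ∈ Finset.Icc 1 n) (hmeas : (E j).meas = Ms j) :
    PrTest ρ n Ms E K + PrTest ρ n Ms (Function.update E j (E j).compl) K
      = PrTest ρ n Ms E (K \ {j}) := by
  have hjl : j ∈ List.range' 1 n := by
    have := Finset.mem_Icc.mp hjn
    rw [List.mem_range'_1]
    omega
  have hE := testEvent_update_eq_update_sdiff Ms E hj (E j)
  rw [Function.update_eq_self] at hE
  have hsplit := PrSeq_map_update_add ρ List.nodup_range' hjl (testEvent Ms E (K \ {j}))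
    (E j).superop_add_superop_compl
  rw [← hE, ← testEvent_update_eq_update_sdiff Ms E hj, hmeas,
    update_testEvent_sdiff_singleton] at hsplit
  simpa only [PrTest_eq_PrSeq_testEvent] using hsplit

theorem indTest_compl_condition_general {d : ℕ} (ρ : Matrix (Fin d) (Fin d) ℂ)
    (n : ℕ) (Ms : ℕ → Measurement d) (E : ℕ → QEvent d)
    (hE : ∀ k ∈ Finset.Icc 1 n, (E k).meas = Ms k)
    (K : Finset ℕ) (hK : K ⊆ Finset.Icc 1 n)
    (i : ℕ) (hKi : ∀ k ∈ K, k < i)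
    (j : ℕ) (hj : j ∈ K)
    (hne : PrTest ρ n Ms E K ≠ 0) (hne' : PrTest ρ n Ms E (K \ {j}) ≠ 0)
    (hne'' : PrTest ρ n Ms (Function.update E j (E j).compl) K ≠ 0)
    (hind : IndTest ρ n Ms E i {j} K) :
    condPrTest ρ n Ms (Function.update E j (E j).compl) {i} K
      = condPrTest ρ n Ms E {i} (K \ {j}) := by
  have hjn := hK hj
  have hsplit := PrTest_add_PrTest_update_compl ρ n Ms E hj hjn (hE j hjn)
  have hsplit_i := PrTest_add_PrTest_update_compl ρ n Ms E (Finset.mem_union_left {i} hj) hjn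
    (hE j hjn)
  have hsdiff : (K ∪ {i}) \ {j} = K \ {j} ∪ {i} := by
    rw [Finset.union_sdiff_distrib, Finset.sdiff_singleton_eq_erase j {i},
      Finset.erase_eq_of_notMem]
    simpa using (hKi j hj).ne
  rw [hsdiff] at hsplit_i
  rw [IndTest, condPrTest, condPrTest, div_eq_div_iff hne hne'] at hind
  rw [condPrTest, condPrTest, div_eq_div_iff hne'' hne']
  linear_combination PrTest ρ n Ms E (K \ {j}) * hsplit_i
    - PrTest ρ n Ms E (K \ {j} ∪ {i}) * hsplit - hind

/-- Proposition 4.3: if `j ∈ K` and `Ind_Σ(E_i | E_j; 𝔼_{K∖j})`, then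
`Ind_Σ(E_i | Ē_j; 𝔼_{K∖j})`, i.e. `Pr_Σ[E_i | 𝔼_K^{(j→Ē_j)}] = Pr_Σ[E_i | 𝔼_{K∖j}]`. -/
theorem indTest_compl_condition {d : ℕ} (ρ : Matrix (Fin d) (Fin d) ℂ)
    (hρ : IsDensityOp ρ) (n : ℕ) (Ms : ℕ → Measurement d) (E : ℕ → QEvent d)
    (hE : ∀ k ∈ Finset.Icc 1 n, (E k).meas = Ms k)
    (K : Finset ℕ) (hK : K ⊆ Finset.Icc 1 n)
    (i : ℕ) (hi : i ∈ Finset.Icc 1 n) (hKi : ∀ k ∈ K, k < i)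
    (j : ℕ) (hj : j ∈ K)
    (hne : PrTest ρ n Ms E K ≠ 0) (hne' : PrTest ρ n Ms E (K \ {j}) ≠ 0)
    (hne'' : PrTest ρ n Ms (Function.update E j (E j).compl) K ≠ 0)
    (hind : IndTest ρ n Ms E i {j} K) :
    condPrTest ρ n Ms (Function.update E j (E j).compl) {i} K
      = condPrTest ρ n Ms E {i} (K \ {j}) :=
  indTest_compl_condition_general ρ n Ms E hE K hK i hKi j hj hne hne' hne'' hind
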